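/- For every integer n ≥ 2, the toric ideal I_{ℤ/2ℤ, n}, defined as the kernel of the ℂ-algebra homomorphism ℂ[q_g : g ∈ (ℤ/2ℤ)^n] → ℂ[a^{(i)}_h : 1 ≤ i ≤ n+1, h ∈ ℤ/2ℤ] sending q_{(g_1,…,g_n)} ↦ a^{(1)}_{g_1} a^{(2)}_{g_2} ⋯ a^{(n)}_{g_n} a^{(n+1)}_{g_1+g_2+⋯+g_n}, is generated by the homogeneous polynomials of degree 2 that it contains. -/

import Mathlib

open MvPolynomial

/-- The monomial map for the claw tree `K_{1,n}` over a group `G`: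
`q_{(g_1,…,g_n)} ↦ a^{(1)}_{g_1} ⋯ a^{(n)}_{g_n} a^{(n+1)}_{g_1+⋯+g_n}`. -/
noncomputable def clawMap (G : Type) [AddCommGroup G] [Fintype G] (n : ℕ) :
    MvPolynomial (Fin n → G) ℂ →ₐ[ℂ] MvPolynomial (Fin (n + 1) × G) ℂ :=
  aeval fun g => (∏ i : Fin n, X (i.castSucc, g i)) * X (Fin.last n, ∑ i, g i)

/-- The toric ideal `I_{G,n}` of the claw tree `K_{1,n}`. -/
noncomputable def clawIdeal (G : Type) [AddCommGroup G] [Fintype G] (n : ℕ) :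
    Ideal (MvPolynomial (Fin n → G) ℂ) :=
  RingHom.ker (clawMap G n)

/-!
The image of `q_g` is the monomial whose exponent `clawExponent g` records the coordinates of the
extended vector `(g, ∑ g)`; over `ℤ/2` these are exactly the vectors of coordinate sum `0`. As for
any monomial map, the kernel is spanned by the binomials `q^A - q^B` for multisets `A`, `B` with
the same image exponent, i.e. with the same column counts of extended vectors. It therefore
suffices that such `A` and `B` are connected by quadratic moves, which replace two vectors by two
others with the same entries in every column. Take `g ∈ A` and `h ∈ B`; the Hamming distance of
their extended vectors is even, so if `g ≠ h` it is at least `2`. Counting, over the columns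
where `g` and `h` differ, the vectors of `A` agreeing with `h` and those of `B` agreeing with `g`
gives `A` a partner of `g` that agrees with `h` in two of these columns, or `B` one of `h` agreeing
with `g` in two of them. Swapping
those two entries between `g` and its partner keeps both sums zero and moves `g` closer to `h`.
Once `A` and `B` share an element, remove it and induct on the size.
-/

open Finset Relation

theorem Multiset.sum_countP_eq_sum_map_card_filter {α ι : Type*} (A : Multiset α) (s : Finset ι)
    (P : ι → α → Prop) [∀ k, DecidablePred (P k)] :
    ∑ k ∈ s, A.countP (P k) = (A.map fun u => #{k ∈ s | P k u}).sum := by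
  induction A using Multiset.induction with
  | empty => simp
  | cons a A ih =>
    rw [Multiset.map_cons, Multiset.sum_cons, ← ih, Finset.card_filter, ← Finset.sum_add_distrib]
    simp only [Multiset.countP_cons, add_comm]

theorem hammingDist_lt_hammingDist {ι β : Type*} [Fintype ι] [DecidableEq β] {x x' y : ι → β}
    (h : ∀ k, x' k ≠ y k → x k ≠ y k) {k : ι} (hk : x k ≠ y k) (hk' : x' k = y k) :
    hammingDist x' y < hammingDist x y :=
  Finset.card_lt_card
    ⟨fun a ha => by simp only [mem_filter, mem_univ, true_and] at ha ⊢; exact h a ha,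
      fun hsub => absurd hk' (by simpa using hsub (by simpa using hk))⟩

namespace MvPolynomial

variable {R σ τ : Type*}

section CommSemiring

variable [CommSemiring R]

theorem prod_map_X_toMultiset (a : σ →₀ ℕ) :
    ((Finsupp.toMultiset a).map X).prod = (monomial a 1 : MvPolynomial σ R) := by
  rw [Finsupp.toMultiset_map, Finsupp.prod_toMultiset,
    Finsupp.prod_mapDomain_index (fun _ => pow_zero _) (fun _ _ _ => pow_add _ _ _),
    monomial_eq, C_1, one_mul]

variable {φ : MvPolynomial σ R →ₐ[R] MvPolynomial τ R} {f : σ → τ →₀ ℕ}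

theorem map_prod_map_X (hφ : ∀ s, φ (X s) = monomial (f s) 1) (A : Multiset σ) :
    φ (A.map X).prod = monomial (A.map f).sum 1 := by
  induction A using Multiset.induction with
  | empty => simp
  | cons s A ih => simp [map_mul, hφ, ih, monomial_mul]

theorem map_monomial_of_map_X (hφ : ∀ s, φ (X s) = monomial (f s) 1) (a : σ →₀ ℕ) (c : R) :
    φ (monomial a c) = monomial ((Finsupp.toMultiset a).map f).sum c := by
  rw [← mul_one c, ← smul_eq_mul, ← smul_monomial, map_smul, ← prod_map_X_toMultiset,
    map_prod_map_X hφ, smul_monomial]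

end CommSemiring

theorem mem_of_map_eq_zero_of_binomial_mem [CommRing R]
    {φ : MvPolynomial σ R →ₐ[R] MvPolynomial τ R} {f : σ → τ →₀ ℕ}
    (hφ : ∀ s, φ (X s) = monomial (f s) 1) {J : Ideal (MvPolynomial σ R)}
    (hJ : ∀ A B : Multiset σ, (A.map f).sum = (B.map f).sum → (A.map X).prod - (B.map X).prod ∈ J)
    {p : MvPolynomial σ R} (hp : φ p = 0) : p ∈ J := by
  set e : (σ →₀ ℕ) → τ →₀ ℕ := fun a => ((Finsupp.toMultiset a).map f).sum
  -- Each monomial of `q` is matched with a fixed representative of its fibre under `e`; the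
  -- representatives of all monomials of `q` add up to a function of `φ q` alone.
  have key : ∀ q, q - AddMonoidAlgebra.mapDomain (Function.invFun e) (φ q) ∈ J := by
    intro q
    induction q using MvPolynomial.induction_on' with
    | monomial a c =>
      have he : e (Function.invFun e (e a)) = e a := Function.invFun_eq ⟨a, rfl⟩
      have hmap : AddMonoidAlgebra.mapDomain (Function.invFun e) (monomial (e a) c) =
          monomial (Function.invFun e (e a)) c := AddMonoidAlgebra.mapDomain_single
      rw [map_monomial_of_map_X hφ, hmap, ← mul_one c, ← smul_eq_mul, ← smul_monomial,
        ← smul_monomial, ← smul_sub, ← prod_map_X_toMultiset, ← prod_map_X_toMultiset]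
      exact Submodule.smul_of_tower_mem J c (hJ _ _ he.symm)
    | add p q hp hq =>
      rw [map_add, AddMonoidAlgebra.mapDomain_add, add_sub_add_comm]
      exact J.add_mem hp hq
  simpa [hp] using key p

end MvPolynomial

section QuadraticMove

variable {σ τ : Type*} (f : σ → τ →₀ ℕ)

def QuadraticMove (A B : Multiset σ) : Prop :=
  ∃ g u g' u' U, f g + f u = f g' + f u' ∧ A = g ::ₘ u ::ₘ U ∧ B = g' ::ₘ u' ::ₘ U

variable {f}

instance : Std.Symm (QuadraticMove f) where
  symm _ _ := fun ⟨g, u, g', u', U, h, hA, hB⟩ => ⟨g', u', g, u, U, h.symm, hB, hA⟩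

theorem QuadraticMove.cons {A B : Multiset σ} (h : QuadraticMove f A B) (x : σ) :
    QuadraticMove f (x ::ₘ A) (x ::ₘ B) := by
  obtain ⟨g, u, g', u', U, h, rfl, rfl⟩ := h
  exact ⟨g, u, g', u', x ::ₘ U, h, by simp only [Multiset.cons_swap x],
    by simp only [Multiset.cons_swap x]⟩

theorem QuadraticMove.sum_map_eq {A B : Multiset σ} (h : QuadraticMove f A B) :
    (A.map f).sum = (B.map f).sum := by
  obtain ⟨g, u, g', u', U, h, rfl, rfl⟩ := h
  simp only [Multiset.map_cons, Multiset.sum_cons, ← add_assoc, h]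

theorem sum_map_eq_of_reflTransGen {A B : Multiset σ} (h : ReflTransGen (QuadraticMove f) A B) :
    (A.map f).sum = (B.map f).sum := by
  induction h with
  | refl => rfl
  | tail _ hBC ih => exact ih.trans hBC.sum_map_eq

variable {R : Type*} [CommRing R] {φ : MvPolynomial σ R →ₐ[R] MvPolynomial τ R}

theorem prod_map_X_sub_mem_of_reflTransGen (hφ : ∀ s, φ (X s) = monomial (f s) 1)
    {A B : Multiset σ} (h : ReflTransGen (QuadraticMove f) A B) :
    (A.map X).prod - (B.map X).prod ∈
      Ideal.span {p : MvPolynomial σ R | p ∈ RingHom.ker φ ∧ p.IsHomogeneous 2} := by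
  induction h with
  | refl => rw [sub_self]; exact zero_mem _
  | tail _ hBC ih =>
    obtain ⟨g, u, g', u', U, hf, rfl, rfl⟩ := hBC
    have hquad : (X g * X u - X g' * X u' : MvPolynomial σ R) ∈
        {p | p ∈ RingHom.ker φ ∧ p.IsHomogeneous 2} :=
      ⟨by simp [hφ, monomial_mul, hf],
        ((isHomogeneous_X R g).mul (isHomogeneous_X R u)).sub
          ((isHomogeneous_X R g').mul (isHomogeneous_X R u'))⟩
    have hstep : ((g ::ₘ u ::ₘ U).map X).prod - ((g' ::ₘ u' ::ₘ U).map X).prod =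
        (X g * X u - X g' * X u' : MvPolynomial σ R) * (U.map X).prod := by
      simp only [Multiset.map_cons, Multiset.prod_cons]; ring
    rw [← sub_add_sub_cancel, hstep]
    exact add_mem ih (Ideal.mul_mem_right _ _ (Ideal.subset_span hquad))

theorem ker_eq_span_isHomogeneous_two_of_reflTransGen (hφ : ∀ s, φ (X s) = monomial (f s) 1)
    (hconn : ∀ A B : Multiset σ, (A.map f).sum = (B.map f).sum →
      ReflTransGen (QuadraticMove f) A B) :
    RingHom.ker φ = Ideal.span {p : MvPolynomial σ R | p ∈ RingHom.ker φ ∧ p.IsHomogeneous 2} :=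
  le_antisymm
    (fun _ hp => mem_of_map_eq_zero_of_binomial_mem hφ
      (fun A B h => prod_map_X_sub_mem_of_reflTransGen hφ (hconn A B h)) hp)
    (Ideal.span_le.mpr fun _ hp => hp.1)

end QuadraticMove

section Claw

variable {G : Type} {n : ℕ}

def appendSum [AddCommMonoid G] (g : Fin n → G) : Fin (n + 1) → G := Fin.snoc g (∑ i, g i)

theorem appendSum_injective [AddCommMonoid G] :
    Function.Injective (appendSum (G := G) (n := n)) :=
  fun g h hgh => by simpa [appendSum] using congrArg Fin.init hgh

noncomputable def clawExponent [AddCommMonoid G] (g : Fin n → G) : Fin (n + 1) × G →₀ ℕ :=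
  ∑ k, Finsupp.single (k, appendSum g k) 1

theorem clawMap_X [AddCommGroup G] [Fintype G] (g : Fin n → G) :
    clawMap G n (X g) = monomial (clawExponent g) 1 := by
  rw [clawMap, aeval_X, clawExponent, monomial_sum_one, Fin.prod_univ_castSucc]
  simp only [appendSum, Fin.snoc_castSucc, Fin.snoc_last]
  rfl

theorem clawExponent_apply [AddCommMonoid G] [DecidableEq G] (g : Fin n → G) (k : Fin (n + 1))
    (c : G) : clawExponent g (k, c) = if appendSum g k = c then 1 else 0 := by
  rw [clawExponent, Finsupp.finsetSum_apply, Finset.sum_eq_single k]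
  · simp [Finsupp.single_apply]
  · intro j _ hj
    simp [hj]
  · simp

theorem sum_map_clawExponent_apply [AddCommMonoid G] [DecidableEq G] (A : Multiset (Fin n → G))
    (k : Fin (n + 1)) (c : G) :
    (A.map clawExponent).sum (k, c) = A.countP (appendSum · k = c) := by
  induction A using Multiset.induction with
  | empty => simp
  | cons g A ih => simp [Multiset.countP_cons, clawExponent_apply, ih, add_comm]

theorem clawExponent_add_clawExponent_of_swap [AddCommMonoid G] {g u g' u' : Fin n → G}
    (h : ∀ k, (appendSum g' k = appendSum g k ∧ appendSum u' k = appendSum u k) ∨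
      (appendSum g' k = appendSum u k ∧ appendSum u' k = appendSum g k)) :
    clawExponent g + clawExponent u = clawExponent g' + clawExponent u' := by
  simp only [clawExponent, ← Finset.sum_add_distrib]
  refine Finset.sum_congr rfl fun k _ => ?_
  rcases h k with ⟨hg, hu⟩ | ⟨hg, hu⟩ <;> rw [hg, hu]
  exact add_comm _ _

theorem sum_appendSum_eq_zero (g : Fin n → ZMod 2) : ∑ k, appendSum g k = 0 := by
  simp [appendSum, Fin.sum_univ_castSucc, CharTwo.add_self_eq_zero]

theorem appendSum_init {v : Fin (n + 1) → ZMod 2} (hv : ∑ k, v k = 0) :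
    appendSum (Fin.init v) = v := by
  rw [Fin.sum_univ_castSucc] at hv
  rw [appendSum, show ∑ i, Fin.init v i = v (Fin.last n) from
    (eq_neg_of_add_eq_zero_left hv).trans (ZMod.neg_eq_self_mod_two _), Fin.snoc_init_self]

theorem countP_appendSum_add_countP_appendSum {a b : ZMod 2} (hab : a ≠ b)
    (A : Multiset (Fin n → ZMod 2)) (k : Fin (n + 1)) :
    A.countP (appendSum · k = a) + A.countP (appendSum · k = b) = Multiset.card A := by
  have hb : ∀ x : ZMod 2, (x = b) = ¬x = a := by revert a b; decide
  rw [Multiset.card_eq_countP_add_countP (appendSum · k = a),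
    Multiset.countP_congr rfl fun g _ => hb (appendSum g k)]

theorem card_eq_of_sum_map_clawExponent_eq {A B : Multiset (Fin n → ZMod 2)}
    (hAB : (A.map clawExponent).sum = (B.map clawExponent).sum) :
    Multiset.card A = Multiset.card B := by
  rw [← countP_appendSum_add_countP_appendSum zero_ne_one A (Fin.last n),
    ← countP_appendSum_add_countP_appendSum zero_ne_one B (Fin.last n),
    ← sum_map_clawExponent_apply, ← sum_map_clawExponent_apply, hAB, sum_map_clawExponent_apply,
    sum_map_clawExponent_apply]

theorem even_hammingDist_appendSum (g h : Fin n → ZMod 2) :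
    Even (hammingDist (appendSum g) (appendSum h)) := by
  have hsub : ∀ x y : ZMod 2, x - y = if x ≠ y then 1 else 0 := by decide
  have hcast : (hammingDist (appendSum g) (appendSum h) : ZMod 2) = 0 := by
    rw [hammingDist, Finset.natCast_card_filter, ← Finset.sum_congr rfl fun k _ => hsub _ _,
      Finset.sum_sub_distrib, sum_appendSum_eq_zero, sum_appendSum_eq_zero, sub_zero]
  exact ZMod.natCast_eq_zero_iff_even.mp hcast

theorem exists_quadraticMove_closer {A : Multiset (Fin n → ZMod 2)} {g u h : Fin n → ZMod 2}
    (hg : g ∈ A) (hu : u ∈ A.erase g)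
    (hgu : 1 < #{k | appendSum g k ≠ appendSum h k ∧ appendSum u k = appendSum h k}) :
    ∃ g' A', QuadraticMove clawExponent A A' ∧ g' ∈ A' ∧
      hammingDist (appendSum g') (appendSum h) < hammingDist (appendSum g) (appendSum h) := by
  obtain ⟨i, hi, j, hj, hij⟩ := Finset.one_lt_card.mp hgu
  simp only [Finset.mem_filter, Finset.mem_univ, true_and] at hi hj
  -- Adding `δ` to both `g` and `u` swaps their entries at `i` and `j`, where they differ; since
  -- `δ` has two nonzero entries, the results still have coordinate sum zero.
  set δ : Fin (n + 1) → ZMod 2 := Pi.single i 1 + Pi.single j 1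
  have hδ : ∑ k, δ k = 0 := by simp [δ, Finset.sum_add_distrib]; decide
  have hδi : δ i = 1 := by simp [δ, hij.symm]
  have hδ_ne : ∀ k, δ k ≠ 0 → appendSum g k ≠ appendSum h k ∧ appendSum u k = appendSum h k := by
    intro k hk
    by_cases hki : k = i
    · exact hki ▸ hi
    by_cases hkj : k = j
    · exact hkj ▸ hj
    simp [δ, hki, hkj] at hk
  have hflip : ∀ x, appendSum (Fin.init (appendSum x + δ)) = appendSum x + δ := fun x =>
    appendSum_init (by
      simp only [Pi.add_apply, Finset.sum_add_distrib, sum_appendSum_eq_zero, hδ, add_zero])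
  have add_eq_of_ne : ∀ a b d : ZMod 2, d ≠ 0 → a ≠ b → a + d = b := by decide
  refine ⟨Fin.init (appendSum g + δ), _,
    ⟨g, u, _, Fin.init (appendSum u + δ), (A.erase g).erase u,
      clawExponent_add_clawExponent_of_swap fun k => ?_,
      by rw [Multiset.cons_erase hu, Multiset.cons_erase hg], rfl⟩,
    Multiset.mem_cons_self _ _, ?_⟩
  · rw [hflip, hflip, Pi.add_apply, Pi.add_apply]
    by_cases hk : δ k = 0
    · simp [hk]
    · obtain ⟨hgk, huk⟩ := hδ_ne k hk
      exact Or.inr ⟨add_eq_of_ne _ _ _ hk (huk ▸ hgk), add_eq_of_ne _ _ _ hk (huk ▸ hgk).symm⟩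
  · rw [hflip]
    refine hammingDist_lt_hammingDist (fun k hk => ?_) hi.1 ?_
    · by_cases hδk : δ k = 0
      · simpa [hδk] using hk
      · exact (hδ_ne k hδk).1
    · rw [Pi.add_apply, hδi]
      exact add_eq_of_ne _ _ _ one_ne_zero hi.1

theorem sum_countP_appendSum_le_card_sub_one {A : Multiset (Fin n → ZMod 2)}
    {g h : Fin n → ZMod 2} (hg : g ∈ A)
    (hA : ∀ u ∈ A.erase g,
      #{k | appendSum g k ≠ appendSum h k ∧ appendSum u k = appendSum h k} ≤ 1) :
    ∑ k with appendSum g k ≠ appendSum h k, A.countP (appendSum · k = appendSum h k) ≤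
      Multiset.card A - 1 := by
  rw [Multiset.sum_countP_eq_sum_map_card_filter, ← Multiset.cons_erase hg, Multiset.map_cons,
    Multiset.sum_cons, Multiset.card_cons, Nat.add_sub_cancel, Finset.filter_filter,
    Finset.filter_false_of_mem (fun k _ h => h.1 h.2), Finset.card_empty, zero_add]
  refine (Multiset.sum_le_card_nsmul _ 1 fun _ hx => ?_).trans (by simp)
  obtain ⟨u, hu, rfl⟩ := Multiset.mem_map.mp hx
  simpa only [Finset.filter_filter] using hA u hu

theorem exists_partner_agreeing_twice {A B : Multiset (Fin n → ZMod 2)}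
    (hAB : (A.map clawExponent).sum = (B.map clawExponent).sum) {g h : Fin n → ZMod 2}
    (hg : g ∈ A) (hh : h ∈ B) (hgh : 2 ≤ hammingDist (appendSum g) (appendSum h)) :
    (∃ u ∈ A.erase g,
        1 < #{k | appendSum g k ≠ appendSum h k ∧ appendSum u k = appendSum h k}) ∨
      ∃ t ∈ B.erase h,
        1 < #{k | appendSum h k ≠ appendSum g k ∧ appendSum t k = appendSum g k} := by
  by_contra! hnone
  have hA := sum_countP_appendSum_le_card_sub_one hg hnone.1
  have hB := sum_countP_appendSum_le_card_sub_one hh hnone.2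
  simp_rw [ne_comm (a := appendSum h _)] at hB
  have hcol : ∀ k ∈ ({k | appendSum g k ≠ appendSum h k} : Finset _),
      A.countP (appendSum · k = appendSum h k) + B.countP (appendSum · k = appendSum g k) =
        Multiset.card A := by
    intro k hk
    rw [← sum_map_clawExponent_apply B, ← hAB, sum_map_clawExponent_apply]
    exact countP_appendSum_add_countP_appendSum (Finset.mem_filter.mp hk).2.symm A k
  have hsum := Finset.sum_congr rfl hcol
  rw [Finset.sum_add_distrib, Finset.sum_const, smul_eq_mul] at hsum
  have hcard := card_eq_of_sum_map_clawExponent_eq hAB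
  have hpos : 0 < Multiset.card A := Multiset.card_pos_iff_exists_mem.mpr ⟨g, hg⟩
  have hle := Nat.mul_le_mul_right (Multiset.card A) hgh
  unfold hammingDist at hle
  omega

theorem exists_common_of_sum_map_clawExponent_eq {A B : Multiset (Fin n → ZMod 2)}
    (hAB : (A.map clawExponent).sum = (B.map clawExponent).sum) {g h : Fin n → ZMod 2}
    (hg : g ∈ A) (hh : h ∈ B) :
    ∃ x A₀ B₀, ReflTransGen (QuadraticMove clawExponent) A (x ::ₘ A₀) ∧
      ReflTransGen (QuadraticMove clawExponent) B (x ::ₘ B₀) := by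
  induction hd : hammingDist (appendSum g) (appendSum h) using Nat.strong_induction_on
    generalizing A B g h with
  | _ d ih =>
  obtain rfl | hd0 := Nat.eq_zero_or_pos d
  · obtain rfl := appendSum_injective (hammingDist_eq_zero.mp hd)
    exact ⟨g, A.erase g, B.erase g, by rw [Multiset.cons_erase hg], by rw [Multiset.cons_erase hh]⟩
  have hd2 : 2 ≤ hammingDist (appendSum g) (appendSum h) := by
    obtain ⟨m, hm⟩ := even_hammingDist_appendSum g h
    omega
  rcases exists_partner_agreeing_twice hAB hg hh hd2 with ⟨u, hu, hgu⟩ | ⟨t, ht, hht⟩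
  · obtain ⟨g', A', hmove, hg', hlt⟩ := exists_quadraticMove_closer hg hu hgu
    obtain ⟨x, A₀, B₀, hA', hB⟩ := ih _ (hd ▸ hlt) (hmove.sum_map_eq.symm.trans hAB) hg' hh rfl
    exact ⟨x, A₀, B₀, hA'.head hmove, hB⟩
  · obtain ⟨h', B', hmove, hh', hlt⟩ := exists_quadraticMove_closer hh ht hht
    rw [hammingDist_comm, hammingDist_comm (appendSum h)] at hlt
    obtain ⟨x, A₀, B₀, hA, hB'⟩ := ih _ (hd ▸ hlt) (hAB.trans hmove.sum_map_eq) hg hh' rfl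
    exact ⟨x, A₀, B₀, hA, hB'.head hmove⟩

theorem reflTransGen_quadraticMove_of_sum_map_clawExponent_eq {A B : Multiset (Fin n → ZMod 2)}
    (hAB : (A.map clawExponent).sum = (B.map clawExponent).sum) :
    ReflTransGen (QuadraticMove clawExponent) A B := by
  induction hc : Multiset.card A using Nat.strong_induction_on generalizing A B with
  | _ c ih =>
  have hcard := card_eq_of_sum_map_clawExponent_eq hAB
  obtain rfl | ⟨g, hg⟩ := Multiset.empty_or_exists_mem A
  · rw [Multiset.card_eq_zero.mp (hcard.symm.trans Multiset.card_zero)]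
  obtain ⟨h, hh⟩ := Multiset.card_pos_iff_exists_mem.mp
    (hcard ▸ Multiset.card_pos_iff_exists_mem.mpr ⟨g, hg⟩)
  obtain ⟨x, A₀, B₀, hA, hB⟩ := exists_common_of_sum_map_clawExponent_eq hAB hg hh
  have hA₀ :=
    (sum_map_eq_of_reflTransGen hA).symm.trans (hAB.trans (sum_map_eq_of_reflTransGen hB))
  simp only [Multiset.map_cons, Multiset.sum_cons, add_right_inj] at hA₀
  have hlt : Multiset.card A₀ < c := by
    rw [← hc, card_eq_of_sum_map_clawExponent_eq (sum_map_eq_of_reflTransGen hA),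
      Multiset.card_cons]
    exact Nat.lt_succ_self _
  exact hA.trans (((ih _ hlt hA₀ rfl).lift _ fun _ _ h => h.cons x).trans (Std.Symm.symm _ _ hB))

end Claw

theorem clawIdeal_zmod2_generated_in_degree_two_general (n : ℕ) :
    clawIdeal (ZMod 2) n =
      Ideal.span {p : MvPolynomial (Fin n → ZMod 2) ℂ |
        p ∈ clawIdeal (ZMod 2) n ∧ p.IsHomogeneous 2} :=
  ker_eq_span_isHomogeneous_two_of_reflTransGen clawMap_X fun _ _ =>
    reflTransGen_quadraticMove_of_sum_map_clawExponent_eq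

/-- **Theorem.** For every `n ≥ 2`, the toric ideal `I_{ℤ/2ℤ,n}` is generated by the
homogeneous polynomials of degree `2` that it contains. -/
theorem clawIdeal_zmod2_generated_in_degree_two (n : ℕ) (hn : 2 ≤ n) :
    clawIdeal (ZMod 2) n =
      Ideal.span {p : MvPolynomial (Fin n → ZMod 2) ℂ |
        p ∈ clawIdeal (ZMod 2) n ∧ p.IsHomogeneous 2} :=
  clawIdeal_zmod2_generated_in_degree_two_general n
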